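/- arXiv:1909.05350 — 4 statements merged into one kernel-verified Lean document; each statement's English description precedes it below -/
import Mathlib

section
/- Let {r_t}_{t≥0} be a non-negative real sequence, a > 0, c ≥ 0, κ ≥ 1, T ≥ 1 an integer. Define γ_t = 2/(a(κ + t)), w_t = κ + t, W_T = ∑_{t=0}^T w_t. Then (1/W_T) ∑_{t=0}^T [ (w_t/γ_t)(1 − aγ_t) r_t − (w_t/γ_t) r_{t+1} + c γ_t w_t ] ≤ aκ² r_0 / T² + 4c/(aT). -/
lemma gauss_aux_stmt13 (n : ℕ) : ∑ t ∈ Finset.range (n + 1), (t:ℝ) = n*(n+1)/2 := by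
  induction n with
  | zero => simp
  | succ m ih =>
    rw [Finset.sum_range_succ, ih]
    push_cast; ring

set_option maxHeartbeats 1000000 in
theorem stmt_13 (r : ℕ → ℝ) (hr : ∀ t, 0 ≤ r t) (a c κ : ℝ) (ha : 0 < a) (hc : 0 ≤ c)
    (hκ : 1 ≤ κ) (T : ℕ) (hT : 1 ≤ T)
    (γ : ℕ → ℝ) (hγ : ∀ t, γ t = 2 / (a * (κ + t)))
    (w : ℕ → ℝ) (hw : ∀ t, w t = κ + t)
    (W : ℝ) (hW : W = ∑ t ∈ Finset.range (T + 1), w t) :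
    (1 / W) * ∑ t ∈ Finset.range (T + 1),
        (w t / γ t * (1 - a * γ t) * r t - w t / γ t * r (t + 1) + c * γ t * w t)
      ≤ a * κ ^ 2 * r 0 / T ^ 2 + 4 * c / (a * T) := by
  have hT1 : (1:ℝ) ≤ (T:ℝ) := by exact_mod_cast hT
  have hTpos : (0:ℝ) < T := lt_of_lt_of_le one_pos hT1
  have hx : ∀ t : ℕ, (1:ℝ) ≤ κ + t := fun t =>
    le_add_of_le_of_nonneg hκ (Nat.cast_nonneg t)
  set g : ℕ → ℝ := fun t => a * (κ + t - 1)^2 / 2 * r t with hg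
  have hpt : ∀ t ∈ Finset.range (T+1),
      w t / γ t * (1 - a * γ t) * r t - w t / γ t * r (t + 1) + c * γ t * w t
      ≤ (g t - g (t+1)) + 2*c/a := by
    intro t _
    have hx0 : (0:ℝ) < κ + t := lt_of_lt_of_le one_pos (hx t)
    have hx0' : (κ + (t:ℝ)) ≠ 0 := ne_of_gt hx0
    have ha' : a ≠ 0 := ne_of_gt ha
    have e1 : w t / γ t = a*(κ+t)^2/2 := by
      rw [hw, hγ]; field_simp
    have e2 : a * γ t = 2/(κ+t) := by
      rw [hγ]; field_simp
    have e3 : c * γ t * w t = 2*c/a := by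
      rw [hγ, hw]; field_simp
    rw [e1, e2, e3, hg]
    push_cast
    have key : (κ+(t:ℝ))^2*(1 - 2/(κ+t)) = (κ+t)^2 - 2*(κ+t) := by
      field_simp
    have hr' := hr t
    have h3 : a*(κ+(t:ℝ))^2/2 * (1 - 2/(κ+t)) * r t ≤ a * (κ + t - 1)^2/2 * r t := by
      have h2 : a*(κ+(t:ℝ))^2/2 * (1 - 2/(κ+t)) = a*((κ+t)^2 - 2*(κ+t))/2 := by
        rw [div_mul_eq_mul_div, mul_assoc, key]
      rw [h2]
      apply mul_le_mul_of_nonneg_right _ hr'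
      nlinarith [sq_nonneg (κ + (t:ℝ) - 1)]
    nlinarith [h3]
  have hsum : ∑ t ∈ Finset.range (T + 1),
        (w t / γ t * (1 - a * γ t) * r t - w t / γ t * r (t + 1) + c * γ t * w t)
      ≤ a * (κ-1)^2/2 * r 0 + (T+1)*(2*c/a) := by
    calc ∑ t ∈ Finset.range (T + 1),
        (w t / γ t * (1 - a * γ t) * r t - w t / γ t * r (t + 1) + c * γ t * w t)
        ≤ ∑ t ∈ Finset.range (T + 1), ((g t - g (t+1)) + 2*c/a) :=
          Finset.sum_le_sum hpt
      _ = (g 0 - g (T+1)) + (T+1)*(2*c/a) := by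
          rw [Finset.sum_add_distrib, Finset.sum_range_sub' g, Finset.sum_const,
            Finset.card_range]
          push_cast; ring
      _ ≤ a * (κ-1)^2/2 * r 0 + (T+1)*(2*c/a) := by
          have hg0 : g 0 = a * (κ-1)^2/2 * r 0 := by simp [hg]
          have hgT : 0 ≤ g (T+1) := by
            have := hr (T+1)
            have h1 : (0:ℝ) ≤ (κ + ((T+1:ℕ):ℝ) - 1) ^ 2 := sq_nonneg _
            positivity
          linarith
  have hWval : W = (T+1)*κ + T*(T+1)/2 := by
    rw [hW]
    have hsw : ∑ t ∈ Finset.range (T + 1), w t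
        = ∑ t ∈ Finset.range (T + 1), (κ + (t:ℝ)) :=
      Finset.sum_congr rfl (fun t _ => hw t)
    rw [hsw, Finset.sum_add_distrib, Finset.sum_const, Finset.card_range,
      gauss_aux_stmt13]
    push_cast; ring
  have hWge : (T:ℝ)*(T+1)/2 ≤ W := by rw [hWval]; nlinarith
  have hWpos : 0 < W := by nlinarith
  have hA : 0 ≤ a * (κ-1)^2/2 * r 0 := by
    have := hr 0; positivity
  have step1 : (1 / W) * ∑ t ∈ Finset.range (T + 1),
        (w t / γ t * (1 - a * γ t) * r t - w t / γ t * r (t + 1) + c * γ t * w t)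
      ≤ (a * (κ-1)^2/2 * r 0 + (T+1)*(2*c/a)) / W := by
    have heq : (a * (κ-1)^2/2 * r 0 + ((T:ℝ)+1)*(2*c/a)) / W
        = (1/W) * (a * (κ-1)^2/2 * r 0 + ((T:ℝ)+1)*(2*c/a)) := by ring
    rw [heq]
    exact mul_le_mul_of_nonneg_left hsum (by positivity)
  refine le_trans step1 ?_
  rw [add_div]
  have h1 : a * (κ-1)^2/2 * r 0 / W ≤ a * κ ^ 2 * r 0 / T ^ 2 := by
    have hT2 : (0:ℝ) < (T:ℝ)^2/2 := by positivity
    have hW2 : (T:ℝ)^2/2 ≤ W := by nlinarith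
    calc a * (κ-1)^2/2 * r 0 / W ≤ a * (κ-1)^2/2 * r 0 / ((T:ℝ)^2/2) :=
          div_le_div_of_nonneg_left hA hT2 hW2
      _ = a * (κ-1)^2 * r 0 / (T:ℝ)^2 := by
          field_simp
      _ ≤ a * κ ^ 2 * r 0 / (T:ℝ) ^ 2 := by
          have hr0 := hr 0
          gcongr a * ?_ * r 0 / (T:ℝ)^2
          nlinarith
  have h2 : ((T:ℝ)+1)*(2*c/a) / W ≤ 4 * c / (a * T) := by
    have hdenom : (0:ℝ) < (T:ℝ)*(T+1)/2 := by positivity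
    calc ((T:ℝ)+1)*(2*c/a) / W ≤ ((T:ℝ)+1)*(2*c/a) / ((T:ℝ)*(T+1)/2) :=
          div_le_div_of_nonneg_left (by positivity) hdenom hWge
      _ = 4 * c / (a * T) := by
          field_simp; ring
  linarith
end

section
/- Let {r_t}_{t≥0} be non-negative reals, d ≥ a > 0, c ≥ 0, and T ≥ 0 an integer. For constant stepsize γ ≤ 1/d and weights w_t = (1 − aγ)^{−(t+1)}, W_T = ∑_{t=0}^T w_t, the quantity Ψ_T = (1/W_T) ∑_{t=0}^T [ (w_t/γ)(1 − aγ) r_t − (w_t/γ) r_{t+1} + c γ w_t ] satisfies Ψ_T ≤ (r_0/γ) exp(−aγT) + cγ. -/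
theorem stmt_14 (r : ℕ → ℝ) (hr : ∀ t, 0 ≤ r t) (a c d γ : ℝ) (ha : 0 < a) (had : a ≤ d)
    (hc : 0 ≤ c) (T : ℕ) (hγ : 0 < γ) (hγd : γ ≤ 1 / d)
    (w : ℕ → ℝ) (hw : ∀ t, w t = (1 - a * γ) ^ (-((t : ℝ) + 1)))
    (W : ℝ) (hW : W = ∑ t ∈ Finset.range (T + 1), w t) :
    (1 / W) * ∑ t ∈ Finset.range (T + 1),
        (w t / γ * (1 - a * γ) * r t - w t / γ * r (t + 1) + c * γ * w t)
      ≤ r 0 / γ * Real.exp (-(a * γ * T)) + c * γ := by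
  have hd : 0 < d := lt_of_lt_of_le ha had
  have haγ1 : a * γ ≤ 1 := by
    rw [le_div_iff₀ hd] at hγd
    nlinarith
  have haγ0 : 0 < a * γ := mul_pos ha hγ
  rcases eq_or_lt_of_le haγ1 with heq | hlt
  · -- a*γ = 1, all weights are 0
    have hβ0 : 1 - a * γ = 0 := by linarith
    have hwz : ∀ t : ℕ, w t = 0 := by
      intro t
      have hne : -((t:ℝ) + 1) ≠ 0 := by
        have h0 : (0:ℝ) ≤ (t:ℝ) := Nat.cast_nonneg t
        intro h; rw [neg_eq_zero] at h; linarith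
      rw [hw t, hβ0, Real.zero_rpow hne]
    have hsum : ∑ t ∈ Finset.range (T + 1),
        (w t / γ * (1 - a * γ) * r t - w t / γ * r (t + 1) + c * γ * w t) = 0 := by
      apply Finset.sum_eq_zero
      intro t _
      rw [hwz t]; ring
    rw [hsum, mul_zero]
    have h1 : 0 ≤ r 0 / γ * Real.exp (-(a * γ * T)) :=
      mul_nonneg (div_nonneg (hr 0) hγ.le) (Real.exp_pos _).le
    have h2 : 0 ≤ c * γ := mul_nonneg hc hγ.le
    linarith
  · set β := 1 - a * γ with hβdef
    have hβpos : 0 < β := by simp only [hβdef]; linarith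
    have hβlt1 : β < 1 := by simp only [hβdef]; linarith
    have hwval : ∀ t : ℕ, w t = (β ^ (t + 1))⁻¹ := by
      intro t
      rw [hw t]
      rw [show -((t:ℝ) + 1) = -(((t+1 : ℕ)):ℝ) by push_cast; ring]
      rw [Real.rpow_neg hβpos.le, Real.rpow_natCast]
    have hwpos : ∀ t : ℕ, 0 < w t := by
      intro t; rw [hwval t]; positivity
    -- telescoping
    have hterm : ∀ t : ℕ,
        w t / γ * (1 - a * γ) * r t - w t / γ * r (t + 1) + c * γ * w t
        = (1/γ) * ((β ^ t)⁻¹ * r t - (β ^ (t+1))⁻¹ * r (t+1)) + c * γ * w t := by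
      intro t
      rw [hwval t, ← hβdef]
      have hβt : (β:ℝ) ^ t ≠ 0 := ne_of_gt (pow_pos hβpos t)
      have hβt1 : (β:ℝ) ^ (t+1) ≠ 0 := ne_of_gt (pow_pos hβpos (t+1))
      field_simp
      ring
    have hsum : ∑ t ∈ Finset.range (T + 1),
        (w t / γ * (1 - a * γ) * r t - w t / γ * r (t + 1) + c * γ * w t)
        = (1/γ) * (r 0 - (β ^ (T+1))⁻¹ * r (T+1)) + c * γ * W := by
      calc ∑ t ∈ Finset.range (T + 1),
          (w t / γ * (1 - a * γ) * r t - w t / γ * r (t + 1) + c * γ * w t)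
          = ∑ t ∈ Finset.range (T + 1),
            ((1/γ) * ((β ^ t)⁻¹ * r t - (β ^ (t+1))⁻¹ * r (t+1)) + c * γ * w t) :=
            Finset.sum_congr rfl fun t _ => hterm t
        _ = (1/γ) * ∑ t ∈ Finset.range (T + 1),
              ((β ^ t)⁻¹ * r t - (β ^ (t+1))⁻¹ * r (t+1))
            + c * γ * ∑ t ∈ Finset.range (T + 1), w t := by
            rw [Finset.sum_add_distrib, Finset.mul_sum, Finset.mul_sum]
        _ = (1/γ) * (r 0 - (β ^ (T+1))⁻¹ * r (T+1)) + c * γ * W := by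
            rw [Finset.sum_range_sub' (fun t => (β ^ t)⁻¹ * r t) (T+1), hW]
            simp
    -- bound on W
    have hWlb : Real.exp (a * γ * T) ≤ W := by
      have h1 : β ≤ Real.exp (-(a * γ)) := by
        have := Real.add_one_le_exp (-(a*γ))
        simp only [hβdef]; linarith
      have h2 : β ^ T ≤ Real.exp (-(a * γ * T)) := by
        calc β ^ T ≤ Real.exp (-(a*γ)) ^ T := pow_le_pow_left₀ hβpos.le h1 T
          _ = Real.exp (-(a * γ * T)) := by
            rw [← Real.exp_nat_mul]; ring_nf
      have h3 : Real.exp (a * γ * T) ≤ (β ^ T)⁻¹ := by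
        have := one_div_le_one_div_of_le (pow_pos hβpos T) h2
        rwa [one_div, one_div, Real.exp_neg, inv_inv] at this
      have hle : β ^ (T+1) ≤ β ^ T := by
        calc β ^ (T+1) = β ^ T * β := pow_succ β T
          _ ≤ β ^ T * 1 := by nlinarith [pow_pos hβpos T]
          _ = β ^ T := mul_one _
      have h4 : (β ^ T)⁻¹ ≤ (β ^ (T+1))⁻¹ := by
        rw [← one_div, ← one_div]
        exact one_div_le_one_div_of_le (pow_pos hβpos (T+1)) hle
      have h5 : (β ^ (T+1))⁻¹ ≤ W := by
        rw [← hwval T, hW]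
        exact Finset.single_le_sum (fun t _ => (hwpos t).le)
          (Finset.self_mem_range_succ T)
      linarith
    have hWpos : 0 < W := lt_of_lt_of_le (Real.exp_pos _) hWlb
    rw [hsum]
    have hstep : (1/W) * ((1/γ) * (r 0 - (β ^ (T+1))⁻¹ * r (T+1)) + c * γ * W)
        = (1/W) * ((1/γ) * (r 0 - (β ^ (T+1))⁻¹ * r (T+1))) + c * γ := by
      field_simp
    rw [hstep]
    have h7 : 1/W ≤ Real.exp (-(a * γ * T)) := by
      rw [Real.exp_neg, ← one_div]
      exact one_div_le_one_div_of_le (Real.exp_pos _) hWlb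
    have hub : (1/W) * ((1/γ) * (r 0 - (β ^ (T+1))⁻¹ * r (T+1)))
        ≤ r 0 / γ * Real.exp (-(a * γ * T)) := by
      set X := (1/γ) * (r 0 - (β ^ (T+1))⁻¹ * r (T+1)) with hX
      have h6 : X ≤ r 0 / γ := by
        have hn : 0 ≤ (β ^ (T+1))⁻¹ * r (T+1) :=
          mul_nonneg (inv_nonneg.mpr (pow_pos hβpos _).le) (hr _)
        have h6a : X ≤ (1/γ) * r 0 := by
          rw [hX]
          exact mul_le_mul_of_nonneg_left (by linarith) (by positivity)
        have h6b : (1/γ) * r 0 = r 0 / γ := by ring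
        linarith
      rcases le_or_gt 0 X with hX0 | hX0
      · calc (1/W) * X ≤ Real.exp (-(a * γ * T)) * X :=
            mul_le_mul_of_nonneg_right h7 hX0
          _ ≤ Real.exp (-(a * γ * T)) * (r 0 / γ) :=
            mul_le_mul_of_nonneg_left h6 (Real.exp_pos _).le
          _ = r 0 / γ * Real.exp (-(a * γ * T)) := mul_comm _ _
      · have hneg : (1/W) * X < 0 :=
          mul_neg_of_pos_of_neg (one_div_pos.mpr hWpos) hX0
        have hpos : 0 ≤ r 0 / γ * Real.exp (-(a * γ * T)) :=
          mul_nonneg (div_nonneg (hr 0) hγ.le) (Real.exp_pos _).le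
        linarith
    linarith
end

section
/- Let f : R^d → R be differentiable, L-smooth, μ-quasi-convex w.r.t. x⋆ (μ ≥ 0, L ≥ μ). Let x, x̃ ∈ R^d and let g = ∇f(x) + ξ where ξ is a zero-mean random vector with E‖ξ‖² ≤ M‖∇f(x)‖² + σ². Define x̃⁺ = x̃ − γ g with 0 < γ ≤ 1/(4L(1+M)). Then E‖x̃⁺ − x⋆‖² ≤ (1 − μγ/2)‖x̃ − x⋆‖² − (γ/2)(f(x) − f(x⋆)) + γ²σ² + 3Lγ‖x − x̃‖². -/
/-!
Since `ξ` has mean zero, expanding the square leaves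
`‖x̃ - γ ∇f(x) - x⋆‖² + γ² E‖ξ‖²`. The descent lemma at `x - ∇f(x) / L` together with the
minimality of `x⋆` gives `‖∇f(x)‖² ≤ 2L (f(x) - f(x⋆))`, so the step-size bound absorbs
`γ² (1 + M) ‖∇f(x)‖²` into `γ/2 (f(x) - f(x⋆))`. Splitting `⟨∇f(x), x̃ - x⋆⟩` at `x`,
quasi-convexity bounds `⟨∇f(x), x - x⋆⟩` and Young's inequality the remainder `⟨∇f(x), x̃ - x⟩`;
finally `‖x̃ - x⋆‖² ≤ 2‖x - x⋆‖² + 2‖x̃ - x‖²` transfers the contraction from `x` to `x̃`.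
-/

open MeasureTheory
open scoped RealInnerProductSpace

section

variable {E : Type*} [NormedAddCommGroup E] [InnerProductSpace ℝ E]

theorem le_add_inner_add_sq_of_lipschitz_gradient [CompleteSpace E] {f : E → ℝ} {g : E → E}
    {L : ℝ} (hgrad : ∀ y, HasGradientAt f (g y) y) (hlip : ∀ y z, ‖g y - g z‖ ≤ L * ‖y - z‖)
    (z y : E) : f y ≤ f z + ⟪g z, y - z⟫ + L / 2 * ‖y - z‖ ^ 2 := by
  set v := y - z
  -- `φ` is `f` minus its quadratic upper model along the segment; Lipschitzness makes it antitone
  let φ : ℝ → ℝ := fun t => f (z + t • v) - t * ⟪g z, v⟫ - L / 2 * t ^ 2 * ‖v‖ ^ 2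
  have hφ' : ∀ t, HasDerivAt φ (⟪g (z + t • v) - g z, v⟫ - L * t * ‖v‖ ^ 2) t := by
    intro t
    have hline : HasDerivAt (fun t : ℝ => z + t • v) v t := by
      simpa using ((hasDerivAt_id t).smul_const v).const_add z
    have hfline := (hgrad (z + t • v)).hasFDerivAt.comp_hasDerivAt t hline
    rw [InnerProductSpace.toDual_apply_apply] at hfline
    refine ((hfline.sub ((hasDerivAt_id t).mul_const ⟪g z, v⟫)).sub
      (((hasDerivAt_pow 2 t).const_mul (L / 2)).mul_const (‖v‖ ^ 2))).congr_deriv ?_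
    rw [inner_sub_left]
    push_cast
    ring
  have hφ'_nonpos : ∀ t ∈ interior (Set.Ici (0 : ℝ)),
      ⟪g (z + t • v) - g z, v⟫ - L * t * ‖v‖ ^ 2 ≤ 0 := by
    intro t ht
    rw [interior_Ici, Set.mem_Ioi] at ht
    rw [sub_nonpos]
    calc ⟪g (z + t • v) - g z, v⟫ ≤ ‖g (z + t • v) - g z‖ * ‖v‖ := real_inner_le_norm _ _
      _ ≤ L * ‖t • v‖ * ‖v‖ := by gcongr ?_ * _; simpa using hlip (z + t • v) z
      _ = L * t * ‖v‖ ^ 2 := by rw [norm_smul, Real.norm_of_nonneg ht.le]; ring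
  have hanti : AntitoneOn φ (Set.Ici 0) :=
    antitoneOn_of_hasDerivWithinAt_nonpos (convex_Ici 0)
      (HasDerivAt.continuousOn fun t _ => hφ' t) (fun t _ => (hφ' t).hasDerivWithinAt)
      hφ'_nonpos
  have hφ10 : φ 1 ≤ φ 0 := hanti (Set.mem_Ici.2 le_rfl) (Set.mem_Ici.2 zero_le_one) zero_le_one
  simp only [φ, v, one_smul, add_sub_cancel, zero_smul, add_zero] at hφ10
  linarith

theorem sq_norm_gradient_le_of_lipschitz_gradient [CompleteSpace E] {f : E → ℝ} {g : E → E}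
    {L : ℝ} (hL : 0 < L) (hgrad : ∀ y, HasGradientAt f (g y) y)
    (hlip : ∀ y z, ‖g y - g z‖ ≤ L * ‖y - z‖) {xstar : E} (hmin : ∀ y, f xstar ≤ f y) (x : E) :
    ‖g x‖ ^ 2 ≤ 2 * L * (f x - f xstar) := by
  have hdesc := le_add_inner_add_sq_of_lipschitz_gradient hgrad hlip x (x - L⁻¹ • g x)
  rw [sub_sub_cancel_left, inner_neg_right, real_inner_smul_right, real_inner_self_eq_norm_sq,
    norm_neg, norm_smul, Real.norm_of_nonneg (inv_nonneg.2 hL.le)] at hdesc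
  have hgap : ‖g x‖ ^ 2 / (2 * L) ≤ f x - f xstar := by
    have := (hmin _).trans hdesc
    field_simp at this ⊢
    linarith
  rwa [div_le_iff₀' (by positivity)] at hgap

theorem integral_norm_sub_sq_of_integral_eq_zero [CompleteSpace E] {Ω : Type*}
    [MeasurableSpace Ω] {P : Measure Ω} [IsProbabilityMeasure P] {X : Ω → E}
    (hX : MemLp X 2 P) (hmean : ∫ ω, X ω ∂P = 0) (c : E) :
    ∫ ω, ‖c - X ω‖ ^ 2 ∂P = ‖c‖ ^ 2 + ∫ ω, ‖X ω‖ ^ 2 ∂P := by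
  have hX1 : Integrable X P := hX.integrable one_le_two
  have hinner : Integrable (fun ω => 2 * ⟪c, X ω⟫) P := (hX1.const_inner c).const_mul 2
  have hsq : Integrable (fun ω => ‖X ω‖ ^ 2) P := hX.integrable_norm_pow'
  simp_rw [norm_sub_sq_real]
  rw [integral_add (f := fun ω => ‖c‖ ^ 2 - 2 * ⟪c, X ω⟫) ((integrable_const _).sub hinner) hsq,
    integral_sub (integrable_const _) hinner, integral_const_mul, integral_inner hX1, hmean]
  simp

theorem sq_norm_gradient_step_add_noise_le {x xt xstar u : E} {L μ M σ2 γ Δ : ℝ}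
    (hL : 0 < L) (hμ : 0 ≤ μ) (hμL : μ ≤ L) (hM : 0 ≤ M) (hγ : 0 < γ)
    (hγle : γ ≤ 1 / (4 * L * (1 + M)))
    (hqc : Δ + μ / 2 * ‖x - xstar‖ ^ 2 ≤ ⟪u, x - xstar⟫) (hu : ‖u‖ ^ 2 ≤ 2 * L * Δ) :
    ‖xt - γ • u - xstar‖ ^ 2 + γ ^ 2 * (M * ‖u‖ ^ 2 + σ2)
      ≤ (1 - μ * γ / 2) * ‖xt - xstar‖ ^ 2 - γ / 2 * Δ + γ ^ 2 * σ2
        + 3 * L * γ * ‖x - xt‖ ^ 2 := by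
  have hexpand : ‖xt - γ • u - xstar‖ ^ 2
      = ‖xt - xstar‖ ^ 2 - 2 * γ * (⟪u, x - xstar⟫ + ⟪u, xt - x⟫) + γ ^ 2 * ‖u‖ ^ 2 := by
    rw [← inner_add_right, sub_add_sub_cancel', sub_right_comm, norm_sub_sq_real,
      real_inner_smul_right, norm_smul, mul_pow, Real.norm_eq_abs, sq_abs, real_inner_comm]
    ring
  -- Young's inequality `2ab ≤ a² / (2L) + 2L b²`, combined with `‖u‖² ≤ 2LΔ`
  have hcross : -⟪u, xt - x⟫ ≤ Δ / 2 + L * ‖x - xt‖ ^ 2 := by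
    have hcs : -⟪u, xt - x⟫ ≤ ‖u‖ * ‖x - xt‖ := by
      rw [← inner_neg_right, neg_sub]; exact real_inner_le_norm _ _
    nlinarith [sq_nonneg (‖u‖ - 2 * L * ‖x - xt‖)]
  have hstep : γ * (1 + M) * ‖u‖ ^ 2 ≤ Δ / 2 := by
    have hγ4 : γ * (4 * L * (1 + M)) ≤ 1 := by
      rwa [← le_div_iff₀ (by positivity)]
    have hΔ : 0 ≤ Δ := by nlinarith [sq_nonneg ‖u‖]
    nlinarith [mul_le_mul_of_nonneg_left hu (by positivity : 0 ≤ γ * (1 + M))]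
  have htri : ‖xt - xstar‖ ^ 2 ≤ 2 * ‖x - xstar‖ ^ 2 + 2 * ‖x - xt‖ ^ 2 := by
    calc ‖xt - xstar‖ ^ 2 ≤ (‖x - xstar‖ + ‖x - xt‖) ^ 2 := by
          gcongr
          linarith [norm_sub_le_norm_sub_add_norm_sub xt x xstar, norm_sub_rev xt x]
      _ ≤ _ := by linarith [add_sq_le (a := ‖x - xstar‖) (b := ‖x - xt‖)]
  rw [hexpand]
  nlinarith [mul_le_mul_of_nonneg_left htri (by positivity : 0 ≤ μ * γ),
    mul_le_mul_of_nonneg_right hμL (by positivity : 0 ≤ γ * ‖x - xt‖ ^ 2)]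

end

theorem stmt_17_general {d : ℕ} {Ω : Type*} [MeasurableSpace Ω] {P : Measure Ω}
    [IsProbabilityMeasure P]
    (f : EuclideanSpace ℝ (Fin d) → ℝ)
    (g : EuclideanSpace ℝ (Fin d) → EuclideanSpace ℝ (Fin d))
    (L μ M sig2 γ : ℝ) (hL : 0 < L) (hμ : 0 ≤ μ) (hμL : μ ≤ L)
    (hM : 0 ≤ M)
    (xstar : EuclideanSpace ℝ (Fin d)) (hmin : ∀ y, f xstar ≤ f y)
    (hgrad : ∀ y, HasGradientAt f (g y) y)
    (hlip : ∀ y z, ‖g y - g z‖ ≤ L * ‖y - z‖)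
    (hqc : ∀ y, f y - f xstar + μ / 2 * ‖y - xstar‖ ^ 2 ≤ ⟪g y, y - xstar⟫)
    (x xt : EuclideanSpace ℝ (Fin d))
    (ξ : Ω → EuclideanSpace ℝ (Fin d)) (hξL2 : MemLp ξ 2 P)
    (hmean : ∫ ω, ξ ω ∂P = 0)
    (hnoise : ∫ ω, ‖ξ ω‖ ^ 2 ∂P ≤ M * ‖g x‖ ^ 2 + sig2)
    (hγ : 0 < γ) (hγle : γ ≤ 1 / (4 * L * (1 + M))) :
    ∫ ω, ‖xt - γ • (g x + ξ ω) - xstar‖ ^ 2 ∂P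
      ≤ (1 - μ * γ / 2) * ‖xt - xstar‖ ^ 2 - γ / 2 * (f x - f xstar)
        + γ ^ 2 * sig2 + 3 * L * γ * ‖x - xt‖ ^ 2 := by
  have hmean_smul : ∫ ω, γ • ξ ω ∂P = 0 := by rw [integral_smul, hmean, smul_zero]
  calc ∫ ω, ‖xt - γ • (g x + ξ ω) - xstar‖ ^ 2 ∂P
      = ∫ ω, ‖(xt - γ • g x - xstar) - γ • ξ ω‖ ^ 2 ∂P := by
        congr with ω
        rw [smul_add]
        abel_nf
    _ = ‖xt - γ • g x - xstar‖ ^ 2 + γ ^ 2 * ∫ ω, ‖ξ ω‖ ^ 2 ∂P := by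
        rw [integral_norm_sub_sq_of_integral_eq_zero (X := fun ω => γ • ξ ω)
          (hξL2.const_smul γ) hmean_smul, ← integral_const_mul]
        simp only [norm_smul, mul_pow, Real.norm_eq_abs, sq_abs]
    _ ≤ ‖xt - γ • g x - xstar‖ ^ 2 + γ ^ 2 * (M * ‖g x‖ ^ 2 + sig2) := by gcongr
    _ ≤ _ := sq_norm_gradient_step_add_noise_le hL hμ hμL hM hγ hγle (hqc x)
        (sq_norm_gradient_le_of_lipschitz_gradient hL hgrad hlip hmin x)

theorem stmt_17 {d : ℕ} {Ω : Type*} [MeasurableSpace Ω] {P : Measure Ω}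
    [IsProbabilityMeasure P]
    (f : EuclideanSpace ℝ (Fin d) → ℝ)
    (g : EuclideanSpace ℝ (Fin d) → EuclideanSpace ℝ (Fin d))
    (L μ M sig2 γ : ℝ) (hL : 0 < L) (hμ : 0 ≤ μ) (hμL : μ ≤ L)
    (hM : 0 ≤ M) (hsig : 0 ≤ sig2)
    (xstar : EuclideanSpace ℝ (Fin d)) (hmin : ∀ y, f xstar ≤ f y)
    (hgrad : ∀ y, HasGradientAt f (g y) y)
    (hlip : ∀ y z, ‖g y - g z‖ ≤ L * ‖y - z‖)
    (hqc : ∀ y, f y - f xstar + μ / 2 * ‖y - xstar‖ ^ 2 ≤ ⟪g y, y - xstar⟫)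
    (x xt : EuclideanSpace ℝ (Fin d))
    (ξ : Ω → EuclideanSpace ℝ (Fin d)) (hξmeas : Measurable ξ) (hξL2 : MemLp ξ 2 P)
    (hmean : ∫ ω, ξ ω ∂P = 0)
    (hnoise : ∫ ω, ‖ξ ω‖ ^ 2 ∂P ≤ M * ‖g x‖ ^ 2 + sig2)
    (hγ : 0 < γ) (hγle : γ ≤ 1 / (4 * L * (1 + M))) :
    ∫ ω, ‖xt - γ • (g x + ξ ω) - xstar‖ ^ 2 ∂P
      ≤ (1 - μ * γ / 2) * ‖xt - xstar‖ ^ 2 - γ / 2 * (f x - f xstar)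
        + γ ^ 2 * sig2 + 3 * L * γ * ‖x - xt‖ ^ 2 :=
  stmt_17_general f g L μ M sig2 γ hL hμ hμL hM xstar hmin hgrad hlip hqc x xt ξ hξL2 hmean hnoise
    hγ hγle
end

section
/- Let f : R^d → R be differentiable and L-smooth with finite infimum f⋆. Let x, x̃ ∈ R^d and g = ∇f(x) + ξ with ξ zero-mean and E‖ξ‖² ≤ M‖∇f(x)‖² + σ². Define x̃⁺ = x̃ − γg with 0 < γ ≤ 1/(2L(1+M)). Then E f(x̃⁺) ≤ f(x̃) − (γ/4)‖∇f(x)‖² + (γ²Lσ²)/2 + (γL²/2)‖x − x̃‖². -/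
/-!
Taylor's bound for an `L`-smooth `f` gives, pointwise in the noise,
`f (x̃ - γ g) ≤ f x̃ - γ ⟪∇f x̃, g⟫ + (L/2) γ² ‖g‖²`; it is two-sided, so it also makes
`f (x̃ - γ g)` integrable. Taking expectations, the zero mean of `ξ` kills the cross terms, leaving
`E f(x̃⁺) ≤ f x̃ - γ ⟪∇f x̃, ∇f x⟫ + (L/2) γ² ((1 + M) ‖∇f x‖² + σ²)`. Finally
`2 ⟪∇f x̃, ∇f x⟫ ≥ ‖∇f x‖² - L² ‖x - x̃‖²` (polarization and Lipschitz gradient), and the step size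
condition absorbs `(L/2) γ² (1 + M) ‖∇f x‖²` into `(γ/4) ‖∇f x‖²`.
-/

open MeasureTheory
open scoped RealInnerProductSpace

section LipschitzGradient

variable {E : Type*} [NormedAddCommGroup E] [InnerProductSpace ℝ E] [CompleteSpace E]
  {f : E → ℝ} {g : E → E} {L : ℝ}

theorem HasGradientAt.hasDerivAt_comp_add_smul {f' y v : E} {t : ℝ}
    (hf : HasGradientAt f f' (y + t • v)) :
    HasDerivAt (fun s : ℝ => f (y + s • v)) ⟪f', v⟫ t := by
  have hline : HasDerivAt (fun s : ℝ => y + s • v) v t := by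
    simpa using ((hasDerivAt_id t).smul_const v).const_add y
  simpa [InnerProductSpace.toDual_apply_apply, Function.comp_def] using
    hf.hasFDerivAt.comp_hasDerivAt t hline

theorem abs_sub_sub_inner_le_of_lipschitz_gradient
    (hgrad : ∀ y, HasGradientAt f (g y) y) (hlip : ∀ y z, ‖g y - g z‖ ≤ L * ‖y - z‖)
    (y v : E) : |f (y + v) - f y - ⟪g y, v⟫| ≤ L / 2 * ‖v‖ ^ 2 := by
  set φ : ℝ → ℝ := fun t => f (y + t • v) - f y - t * ⟪g y, v⟫
  have hφ : ∀ t, HasDerivAt φ ⟪g (y + t • v) - g y, v⟫ t := fun t =>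
    ((((hgrad _).hasDerivAt_comp_add_smul).sub_const (f y)).sub
        ((hasDerivAt_id' t).mul_const ⟪g y, v⟫)).congr_deriv (by rw [inner_sub_left, one_mul])
  have hB : ∀ t : ℝ, HasDerivAt (fun t => L / 2 * ‖v‖ ^ 2 * t ^ 2) (L * ‖v‖ ^ 2 * t) t :=
    fun t => ((hasDerivAt_pow 2 t).const_mul (L / 2 * ‖v‖ ^ 2)).congr_deriv (by ring)
  have key := image_norm_le_of_norm_deriv_right_le_deriv_boundary (a := 0) (b := 1)
    (fun t _ => (hφ t).continuousAt.continuousWithinAt) (fun t _ => (hφ t).hasDerivWithinAt)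
    (by simp [φ]) hB (fun t ht => ?_) (Set.right_mem_Icc.2 zero_le_one)
  · simpa [φ] using key
  · calc ‖⟪g (y + t • v) - g y, v⟫‖ ≤ ‖g (y + t • v) - g y‖ * ‖v‖ := by
          simpa using abs_real_inner_le_norm _ _
      _ ≤ L * ‖(y + t • v) - y‖ * ‖v‖ := by gcongr; exact hlip _ _
      _ = L * ‖v‖ ^ 2 * t := by
          rw [add_sub_cancel_left, norm_smul, Real.norm_of_nonneg ht.1]; ring

end LipschitzGradient

section Expectation

variable {E : Type*} [NormedAddCommGroup E] [InnerProductSpace ℝ E] [CompleteSpace E]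
  {Ω : Type*} [MeasurableSpace Ω] {P : Measure Ω} {f : E → ℝ} {g : E → E} {L : ℝ}

theorem integrable_comp_add_of_lipschitz_gradient [IsFiniteMeasure P]
    (hgrad : ∀ y, HasGradientAt f (g y) y) (hlip : ∀ y z, ‖g y - g z‖ ≤ L * ‖y - z‖)
    (y : E) {V : Ω → E} (hV : MemLp V 2 P) :
    Integrable (fun ω => f (y + V ω)) P := by
  have hf : Continuous f := continuous_iff_continuousAt.2 fun y => (hgrad y).continuousAt
  have hlin : Integrable (fun ω => f y + ⟪g y, V ω⟫) P :=
    (integrable_const _).add ((hV.integrable one_le_two).const_inner _)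
  have hrem : Integrable (fun ω => f (y + V ω) - f y - ⟪g y, V ω⟫) P := by
    refine Integrable.mono' ((hV.integrable_norm_pow two_ne_zero).const_mul (L / 2)) ?_
      (ae_of_all _ fun ω => abs_sub_sub_inner_le_of_lipschitz_gradient hgrad hlip y (V ω))
    exact ((hf.comp_aestronglyMeasurable (aestronglyMeasurable_const.add hV.1)).sub
      aestronglyMeasurable_const).sub ((hV.integrable one_le_two).const_inner _).1
  refine (hrem.add hlin).congr (ae_of_all _ fun ω => ?_)
  simp only [Pi.add_apply]
  ring

theorem integral_comp_add_le_of_lipschitz_gradient [IsProbabilityMeasure P]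
    (hgrad : ∀ y, HasGradientAt f (g y) y) (hlip : ∀ y z, ‖g y - g z‖ ≤ L * ‖y - z‖)
    (y : E) {V : Ω → E} (hV : MemLp V 2 P) :
    ∫ ω, f (y + V ω) ∂P ≤ f y + ⟪g y, ∫ ω, V ω ∂P⟫ + L / 2 * ∫ ω, ‖V ω‖ ^ 2 ∂P := by
  have hVint : Integrable V P := hV.integrable one_le_two
  have hsq : Integrable (fun ω => ‖V ω‖ ^ 2) P := hV.integrable_norm_pow two_ne_zero
  have hlin : Integrable (fun ω => f y + ⟪g y, V ω⟫) P :=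
    (integrable_const _).add (hVint.const_inner _)
  calc ∫ ω, f (y + V ω) ∂P ≤ ∫ ω, (f y + ⟪g y, V ω⟫ + L / 2 * ‖V ω‖ ^ 2) ∂P := by
        refine integral_mono (integrable_comp_add_of_lipschitz_gradient hgrad hlip y hV)
          (hlin.add (hsq.const_mul _)) fun ω => ?_
        linarith [(abs_le.1 (abs_sub_sub_inner_le_of_lipschitz_gradient hgrad hlip y (V ω))).2]
    _ = f y + ⟪g y, ∫ ω, V ω ∂P⟫ + L / 2 * ∫ ω, ‖V ω‖ ^ 2 ∂P := by
        rw [integral_add hlin (hsq.const_mul _),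
          integral_add (integrable_const _) (hVint.const_inner _), integral_const,
          integral_inner hVint, integral_const_mul]
        simp

theorem integral_norm_add_sq_of_integral_eq_zero [IsProbabilityMeasure P] (a : E) {ξ : Ω → E}
    (hξ : MemLp ξ 2 P) (hmean : ∫ ω, ξ ω ∂P = 0) :
    ∫ ω, ‖a + ξ ω‖ ^ 2 ∂P = ‖a‖ ^ 2 + ∫ ω, ‖ξ ω‖ ^ 2 ∂P := by
  have hξint : Integrable ξ P := hξ.integrable one_le_two
  have hlin : Integrable (fun ω => ‖a‖ ^ 2 + 2 * ⟪a, ξ ω⟫) P :=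
    (integrable_const _).add ((hξint.const_inner a).const_mul 2)
  simp_rw [norm_add_sq_real]
  rw [integral_add hlin (hξ.integrable_norm_pow two_ne_zero),
    integral_add (integrable_const _) ((hξint.const_inner a).const_mul 2), integral_const,
    integral_const_mul, integral_inner hξint, hmean]
  simp

end Expectation

theorem stmt_18_general {d : ℕ} {Ω : Type*} [MeasurableSpace Ω] {P : Measure Ω}
    [IsProbabilityMeasure P]
    (f : EuclideanSpace ℝ (Fin d) → ℝ)
    (g : EuclideanSpace ℝ (Fin d) → EuclideanSpace ℝ (Fin d))
    (L M sig2 γ : ℝ) (hL : 0 < L) (hM : 0 ≤ M)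
    (hgrad : ∀ y, HasGradientAt f (g y) y)
    (hlip : ∀ y z, ‖g y - g z‖ ≤ L * ‖y - z‖)
    (x xt : EuclideanSpace ℝ (Fin d))
    (ξ : Ω → EuclideanSpace ℝ (Fin d)) (hξL2 : MemLp ξ 2 P)
    (hmean : ∫ ω, ξ ω ∂P = 0)
    (hnoise : ∫ ω, ‖ξ ω‖ ^ 2 ∂P ≤ M * ‖g x‖ ^ 2 + sig2)
    (hγ : 0 < γ) (hγle : γ ≤ 1 / (2 * L * (1 + M))) :
    ∫ ω, f (xt - γ • (g x + ξ ω)) ∂P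
      ≤ f xt - γ / 4 * ‖g x‖ ^ 2 + γ ^ 2 * L * sig2 / 2
        + γ * L ^ 2 / 2 * ‖x - xt‖ ^ 2 := by
  have hstep : MemLp (fun ω => -(γ • (g x + ξ ω))) 2 P :=
    (((memLp_const (g x)).add hξL2).const_smul γ).neg
  have hmean_step : ∫ ω, -(γ • (g x + ξ ω)) ∂P = -(γ • g x) := by
    rw [integral_neg, integral_smul, integral_add (integrable_const _)
      (hξL2.integrable one_le_two), hmean]
    simp
  have hsq_step : ∫ ω, ‖-(γ • (g x + ξ ω))‖ ^ 2 ∂P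
      = γ ^ 2 * (‖g x‖ ^ 2 + ∫ ω, ‖ξ ω‖ ^ 2 ∂P) := by
    simp only [norm_neg, norm_smul, mul_pow, Real.norm_of_nonneg hγ.le]
    rw [integral_const_mul, integral_norm_add_sq_of_integral_eq_zero (g x) hξL2 hmean]
  have hdescent := integral_comp_add_le_of_lipschitz_gradient hgrad hlip xt hstep
  rw [hmean_step, hsq_step, inner_neg_right, real_inner_smul_right] at hdescent
  simp only [← sub_eq_add_neg] at hdescent
  have hinner : ‖g x‖ ^ 2 - L ^ 2 * ‖x - xt‖ ^ 2 ≤ 2 * ⟪g xt, g x⟫ := by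
    have hdiff : ‖g x - g xt‖ ^ 2 ≤ (L * ‖x - xt‖) ^ 2 := by gcongr; exact hlip x xt
    rw [norm_sub_sq_real, real_inner_comm, mul_pow] at hdiff
    linarith [sq_nonneg ‖g xt‖]
  have hγsmall : γ * (2 * L * (1 + M)) ≤ 1 := by
    rwa [← le_div_iff₀ (by positivity)]
  linarith [mul_le_mul_of_nonneg_left hinner (by positivity : (0 : ℝ) ≤ γ / 2),
    mul_le_mul_of_nonneg_left hnoise (by positivity : (0 : ℝ) ≤ L / 2 * γ ^ 2),
    mul_le_mul_of_nonneg_right hγsmall (by positivity : (0 : ℝ) ≤ γ * ‖g x‖ ^ 2 / 4)]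

theorem stmt_18 {d : ℕ} {Ω : Type*} [MeasurableSpace Ω] {P : Measure Ω}
    [IsProbabilityMeasure P]
    (f : EuclideanSpace ℝ (Fin d) → ℝ)
    (g : EuclideanSpace ℝ (Fin d) → EuclideanSpace ℝ (Fin d))
    (L M sig2 γ fstar : ℝ) (hL : 0 < L) (hM : 0 ≤ M) (hsig : 0 ≤ sig2)
    (hgrad : ∀ y, HasGradientAt f (g y) y)
    (hlip : ∀ y z, ‖g y - g z‖ ≤ L * ‖y - z‖)
    (hfstar : IsGLB (Set.range f) fstar)
    (x xt : EuclideanSpace ℝ (Fin d))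
    (ξ : Ω → EuclideanSpace ℝ (Fin d)) (hξmeas : Measurable ξ) (hξL2 : MemLp ξ 2 P)
    (hmean : ∫ ω, ξ ω ∂P = 0)
    (hnoise : ∫ ω, ‖ξ ω‖ ^ 2 ∂P ≤ M * ‖g x‖ ^ 2 + sig2)
    (hγ : 0 < γ) (hγle : γ ≤ 1 / (2 * L * (1 + M))) :
    ∫ ω, f (xt - γ • (g x + ξ ω)) ∂P
      ≤ f xt - γ / 4 * ‖g x‖ ^ 2 + γ ^ 2 * L * sig2 / 2
        + γ * L ^ 2 / 2 * ‖x - xt‖ ^ 2 :=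
  stmt_18_general f g L M sig2 γ hL hM hgrad hlip x xt ξ hξL2 hmean hnoise hγ hγle
end
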